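/- arXiv:2104.00396 — 8 statements merged into one kernel-verified Lean document; each statement's English description precedes it below -/
import Mathlib

section
/- Let A = [[A₁₁, A₁₂],[0, A₂₂]] ∈ ℂ^{m×m} and B = [[B₁₁, B₁₂],[0, B₂₂]] ∈ ℂ^{n×n} be block upper triangular with square diagonal blocks, let V satisfy A₁₁V − VA₂₂ = A₁₂ and W satisfy B₁₁W − WB₂₂ = B₁₂, and let C = [[C₁₁, C₁₂],[C₂₁, C₂₂]] ∈ ℂ^{m×n} be partitioned conformally. Write L₁(x) = (xI − A₁₁)⁻¹, L₂(x) = (xI − A₂₂)⁻¹, R₁(y) = (yI − B₁₁)⁻¹, R₂(y) = (yI − B₂₂)⁻¹. Then for every x ∈ ℂ outside the spectra of A₁₁ and A₂₂ and every y ∈ ℂ outside the spectra of B₁₁ and B₂₂: (xI − A)⁻¹ C (yI − B)⁻¹ = [I;0]·L₁(x)(C₁₁ + VC₂₁)R₁(y)·[I, W] + [−V;I]·L₂(x)C₂₁R₁(y)·[I, W] + [I;0]·L₁(x)([I, V]·C·[−W;I])R₂(y)·[0, I] + [−V;I]·L₂(x)(C₂₂ − C₂₁W)R₂(y)·[0,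 I]. -/
/-!
If `A₁₁ V - V A₂₂ = A₁₂`, then `S = [[I, -V], [0, I]]` block-diagonalises
`A = [[A₁₁, A₁₂], [0, A₂₂]]`: its columns `[I; 0]` and `[-V; I]` satisfy
`A [I; 0] = [I; 0] A₁₁` and `A [-V; I] = [-V; I] A₂₂`, and the rows of `S⁻¹` are `[I, V]` and
`[0, I]`. Hence `(xI - A)⁻¹ = [I; 0] L₁(x) [I, V] + [-V; I] L₂(x) [0, I]`, likewise for `B`, and
multiplying out `(xI - A)⁻¹ C (yI - B)⁻¹` gives the four terms, whose middle factors are the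
blocks of `S⁻¹ C T` with `T = [[I, -W], [0, I]]`.
-/

open Matrix

namespace Matrix

section

variable {R m n : Type*} [CommRing R] [Fintype m] [Fintype n]
  {T₁₁ : Matrix m m R} {T₁₂ : Matrix m n R} {T₂₂ : Matrix n n R} {U : Matrix m n R}

theorem fromBlocks_zero₂₁_mul_fromRows_one_zero [DecidableEq m] :
    fromBlocks T₁₁ T₁₂ 0 T₂₂ * fromRows (1 : Matrix m m R) (0 : Matrix n m R) =
      (fromRows 1 0 : Matrix (m ⊕ n) m R) * T₁₁ := by
  rw [fromBlocks_mul_fromRows, fromRows_mul]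
  simp

theorem fromBlocks_zero₂₁_mul_fromRows_neg_one [DecidableEq n]
    (hU : T₁₁ * U - U * T₂₂ = T₁₂) :
    fromBlocks T₁₁ T₁₂ 0 T₂₂ * fromRows (-U) (1 : Matrix n n R) =
      (fromRows (-U) 1 : Matrix (m ⊕ n) n R) * T₂₂ := by
  rw [fromBlocks_mul_fromRows, fromRows_mul, ← hU]
  congr 1
  · rw [Matrix.mul_neg, Matrix.mul_one, Matrix.neg_mul]
    abel
  · simp

theorem fromRows_mul_fromCols_add_fromRows_mul_fromCols_eq_one [DecidableEq m] [DecidableEq n] :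
    fromRows (1 : Matrix m m R) (0 : Matrix n m R) * fromCols 1 U
      + fromRows (-U) (1 : Matrix n n R) * fromCols (0 : Matrix n m R) 1 = 1 := by
  rw [fromRows_mul_fromCols, fromRows_mul_fromCols, fromBlocks_add, ← fromBlocks_one]
  simp

theorem inv_fromBlocks_zero₂₁_of_sylvester [DecidableEq m] [DecidableEq n]
    (hU : T₁₁ * U - U * T₂₂ = T₁₂) (h₁ : IsUnit T₁₁.det) (h₂ : IsUnit T₂₂.det) :
    (fromBlocks T₁₁ T₁₂ 0 T₂₂)⁻¹ =
      fromRows (1 : Matrix m m R) (0 : Matrix n m R) * T₁₁⁻¹ * fromCols 1 U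
        + fromRows (-U) (1 : Matrix n n R) * T₂₂⁻¹ * fromCols (0 : Matrix n m R) 1 := by
  apply inv_eq_right_inv
  rw [Matrix.mul_add, ← Matrix.mul_assoc, ← Matrix.mul_assoc, ← Matrix.mul_assoc,
    ← Matrix.mul_assoc, fromBlocks_zero₂₁_mul_fromRows_one_zero,
    fromBlocks_zero₂₁_mul_fromRows_neg_one hU, mul_nonsing_inv_cancel_right T₁₁ _ h₁,
    mul_nonsing_inv_cancel_right T₂₂ _ h₂, fromRows_mul_fromCols_add_fromRows_mul_fromCols_eq_one]

end

variable {R m n : Type*} [CommRing R] [DecidableEq m] [DecidableEq n]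

theorem isUnit_det_smul_one_sub_of_notMem_spectrum [Fintype n] {x : R} {M : Matrix n n R}
    (h : x ∉ spectrum R M) : IsUnit (x • 1 - M).det := by
  rw [← isUnit_iff_isUnit_det, ← Algebra.algebraMap_eq_smul_one]
  exact spectrum.notMem_iff.mp h

theorem smul_one_sub_fromBlocks (x : R) (A₁₁ : Matrix m m R) (A₁₂ : Matrix m n R)
    (A₂₁ : Matrix n m R) (A₂₂ : Matrix n n R) :
    x • 1 - fromBlocks A₁₁ A₁₂ A₂₁ A₂₂ =
      fromBlocks (x • 1 - A₁₁) (-A₁₂) (-A₂₁) (x • 1 - A₂₂) := by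
  rw [← fromBlocks_one, fromBlocks_smul, sub_eq_add_neg, fromBlocks_neg, fromBlocks_add]
  simp [sub_eq_add_neg]

theorem inv_smul_one_sub_fromBlocks_zero₂₁_of_sylvester [Fintype m] [Fintype n]
    {A₁₁ : Matrix m m R} {A₁₂ : Matrix m n R} {A₂₂ : Matrix n n R} {V : Matrix m n R}
    (hV : A₁₁ * V - V * A₂₂ = A₁₂) {x : R} (hx₁ : x ∉ spectrum R A₁₁)
    (hx₂ : x ∉ spectrum R A₂₂) :
    (x • 1 - fromBlocks A₁₁ A₁₂ 0 A₂₂)⁻¹ =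
      fromRows (1 : Matrix m m R) (0 : Matrix n m R) * (x • 1 - A₁₁)⁻¹ * fromCols 1 V
        + fromRows (-V) (1 : Matrix n n R) * (x • 1 - A₂₂)⁻¹ * fromCols (0 : Matrix n m R) 1 := by
  have hV' : (x • 1 - A₁₁) * V - V * (x • 1 - A₂₂) = -A₁₂ := by
    rw [← hV, Matrix.sub_mul, Matrix.mul_sub, Matrix.smul_mul, Matrix.mul_smul, Matrix.one_mul,
      Matrix.mul_one]
    abel
  rw [smul_one_sub_fromBlocks, neg_zero]
  exact inv_fromBlocks_zero₂₁_of_sylvester hV'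
    (isUnit_det_smul_one_sub_of_notMem_spectrum hx₁)
    (isUnit_det_smul_one_sub_of_notMem_spectrum hx₂)

section

variable {m₁ m₂ n₁ n₂ : Type*} [Fintype m₁] [Fintype m₂] [Fintype n₁] [Fintype n₂]
  (C₁₁ : Matrix m₁ n₁ R) (C₁₂ : Matrix m₁ n₂ R) (C₂₁ : Matrix m₂ n₁ R) (C₂₂ : Matrix m₂ n₂ R)

theorem fromCols_one_mul_fromBlocks_mul_fromRows_one_zero [DecidableEq m₁] [DecidableEq n₁]
    (V : Matrix m₁ m₂ R) :
    fromCols (1 : Matrix m₁ m₁ R) V * fromBlocks C₁₁ C₁₂ C₂₁ C₂₂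
      * fromRows (1 : Matrix n₁ n₁ R) (0 : Matrix n₂ n₁ R) = C₁₁ + V * C₂₁ := by
  simp [fromCols_mul_fromBlocks, fromCols_mul_fromRows]

theorem fromCols_zero_one_mul_fromBlocks_mul_fromRows_one_zero [DecidableEq m₂] [DecidableEq n₁] :
    fromCols (0 : Matrix m₂ m₁ R) (1 : Matrix m₂ m₂ R) * fromBlocks C₁₁ C₁₂ C₂₁ C₂₂
      * fromRows (1 : Matrix n₁ n₁ R) (0 : Matrix n₂ n₁ R) = C₂₁ := by
  simp [fromCols_mul_fromBlocks, fromCols_mul_fromRows]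

theorem fromCols_zero_one_mul_fromBlocks_mul_fromRows_neg_one [DecidableEq m₂] [DecidableEq n₂]
    (W : Matrix n₁ n₂ R) :
    fromCols (0 : Matrix m₂ m₁ R) (1 : Matrix m₂ m₂ R) * fromBlocks C₁₁ C₁₂ C₂₁ C₂₂
      * fromRows (-W) (1 : Matrix n₂ n₂ R) = C₂₂ - C₂₁ * W := by
  simp [fromCols_mul_fromBlocks, fromCols_mul_fromRows, neg_add_eq_sub]

end

theorem inv_smul_one_sub_mul_mul_inv_smul_one_sub_of_sylvester {m₁ m₂ n₁ n₂ : Type*}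
    [Fintype m₁] [Fintype m₂] [Fintype n₁] [Fintype n₂] [DecidableEq m₁] [DecidableEq m₂]
    [DecidableEq n₁] [DecidableEq n₂]
    {A₁₁ : Matrix m₁ m₁ R} {A₁₂ : Matrix m₁ m₂ R} {A₂₂ : Matrix m₂ m₂ R} {V : Matrix m₁ m₂ R}
    {B₁₁ : Matrix n₁ n₁ R} {B₁₂ : Matrix n₁ n₂ R} {B₂₂ : Matrix n₂ n₂ R} {W : Matrix n₁ n₂ R}
    (hV : A₁₁ * V - V * A₂₂ = A₁₂) (hW : B₁₁ * W - W * B₂₂ = B₁₂) {x y : R}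
    (hx₁ : x ∉ spectrum R A₁₁) (hx₂ : x ∉ spectrum R A₂₂)
    (hy₁ : y ∉ spectrum R B₁₁) (hy₂ : y ∉ spectrum R B₂₂) (C : Matrix (m₁ ⊕ m₂) (n₁ ⊕ n₂) R) :
    (x • 1 - fromBlocks A₁₁ A₁₂ 0 A₂₂)⁻¹ * C * (y • 1 - fromBlocks B₁₁ B₁₂ 0 B₂₂)⁻¹ =
      fromRows (1 : Matrix m₁ m₁ R) (0 : Matrix m₂ m₁ R) *
          ((x • 1 - A₁₁)⁻¹
            * (fromCols (1 : Matrix m₁ m₁ R) V * C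
              * fromRows (1 : Matrix n₁ n₁ R) (0 : Matrix n₂ n₁ R) : Matrix m₁ n₁ R)
            * (y • 1 - B₁₁)⁻¹) * fromCols (1 : Matrix n₁ n₁ R) W
        + fromRows (-V) (1 : Matrix m₂ m₂ R) *
          ((x • 1 - A₂₂)⁻¹
            * (fromCols (0 : Matrix m₂ m₁ R) (1 : Matrix m₂ m₂ R) * C
              * fromRows (1 : Matrix n₁ n₁ R) (0 : Matrix n₂ n₁ R) : Matrix m₂ n₁ R)
            * (y • 1 - B₁₁)⁻¹) * fromCols (1 : Matrix n₁ n₁ R) W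
        + fromRows (1 : Matrix m₁ m₁ R) (0 : Matrix m₂ m₁ R) *
          ((x • 1 - A₁₁)⁻¹
            * (fromCols (1 : Matrix m₁ m₁ R) V * C * fromRows (-W) (1 : Matrix n₂ n₂ R)
              : Matrix m₁ n₂ R)
            * (y • 1 - B₂₂)⁻¹) * fromCols (0 : Matrix n₂ n₁ R) (1 : Matrix n₂ n₂ R)
        + fromRows (-V) (1 : Matrix m₂ m₂ R) *
          ((x • 1 - A₂₂)⁻¹
            * (fromCols (0 : Matrix m₂ m₁ R) (1 : Matrix m₂ m₂ R) * C
              * fromRows (-W) (1 : Matrix n₂ n₂ R) : Matrix m₂ n₂ R)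
            * (y • 1 - B₂₂)⁻¹) * fromCols (0 : Matrix n₂ n₁ R) (1 : Matrix n₂ n₂ R) := by
  rw [inv_smul_one_sub_fromBlocks_zero₂₁_of_sylvester hV hx₁ hx₂,
    inv_smul_one_sub_fromBlocks_zero₂₁_of_sylvester hW hy₁ hy₂]
  simp only [Matrix.add_mul, Matrix.mul_add, Matrix.mul_assoc]
  abel

end Matrix

/-- For block upper triangular `A`, `B`, a conformally partitioned `C`, and Sylvester
solutions `V`, `W`, the product of resolvents `(xI − A)⁻¹ C (yI − B)⁻¹` splits into four
terms, one for each pair of diagonal blocks. -/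
theorem resolvent_product_splitting (p q r s : ℕ)
    (A₁₁ : Matrix (Fin p) (Fin p) ℂ) (A₁₂ : Matrix (Fin p) (Fin q) ℂ)
    (A₂₂ : Matrix (Fin q) (Fin q) ℂ)
    (B₁₁ : Matrix (Fin r) (Fin r) ℂ) (B₁₂ : Matrix (Fin r) (Fin s) ℂ)
    (B₂₂ : Matrix (Fin s) (Fin s) ℂ)
    (C₁₁ : Matrix (Fin p) (Fin r) ℂ) (C₁₂ : Matrix (Fin p) (Fin s) ℂ)
    (C₂₁ : Matrix (Fin q) (Fin r) ℂ) (C₂₂ : Matrix (Fin q) (Fin s) ℂ)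
    (V : Matrix (Fin p) (Fin q) ℂ) (W : Matrix (Fin r) (Fin s) ℂ)
    (hV : A₁₁ * V - V * A₂₂ = A₁₂) (hW : B₁₁ * W - W * B₂₂ = B₁₂)
    (x y : ℂ)
    (hx₁ : x ∉ spectrum ℂ A₁₁) (hx₂ : x ∉ spectrum ℂ A₂₂)
    (hy₁ : y ∉ spectrum ℂ B₁₁) (hy₂ : y ∉ spectrum ℂ B₂₂) :
    (x • 1 - fromBlocks A₁₁ A₁₂ 0 A₂₂)⁻¹ * fromBlocks C₁₁ C₁₂ C₂₁ C₂₂ *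
        (y • 1 - fromBlocks B₁₁ B₁₂ 0 B₂₂)⁻¹ =
      (fromRows 1 0 : Matrix (Fin p ⊕ Fin q) (Fin p) ℂ) *
          ((x • 1 - A₁₁)⁻¹ * (C₁₁ + V * C₂₁) * (y • 1 - B₁₁)⁻¹) * fromCols 1 W
      + fromRows (-V) 1 *
          ((x • 1 - A₂₂)⁻¹ * C₂₁ * (y • 1 - B₁₁)⁻¹) * fromCols 1 W
      + (fromRows 1 0 : Matrix (Fin p ⊕ Fin q) (Fin p) ℂ) *
          ((x • 1 - A₁₁)⁻¹ *
            ((fromCols 1 V : Matrix (Fin p) (Fin p ⊕ Fin q) ℂ) *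
              fromBlocks C₁₁ C₁₂ C₂₁ C₂₂ *
              (fromRows (-W) 1 : Matrix (Fin r ⊕ Fin s) (Fin s) ℂ)) *
            (y • 1 - B₂₂)⁻¹) * fromCols 0 1
      + fromRows (-V) 1 *
          ((x • 1 - A₂₂)⁻¹ * (C₂₂ - C₂₁ * W) * (y • 1 - B₂₂)⁻¹) * fromCols 0 1 := by
  have h := inv_smul_one_sub_mul_mul_inv_smul_one_sub_of_sylvester hV hW hx₁ hx₂ hy₁ hy₂
    (fromBlocks C₁₁ C₁₂ C₂₁ C₂₂)
  rwa [fromCols_one_mul_fromBlocks_mul_fromRows_one_zero,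
    fromCols_zero_one_mul_fromBlocks_mul_fromRows_one_zero,
    fromCols_zero_one_mul_fromBlocks_mul_fromRows_neg_one] at h
end

section
/- Let A = [[A₁₁, A₁₂],[0, A₂₂]] ∈ ℂ^{m×m} and B = [[B₁₁, B₁₂],[0, B₂₂]] ∈ ℂ^{n×n} be block upper triangular with square diagonal blocks, let V satisfy A₁₁V − VA₂₂ = A₁₂ and W satisfy B₁₁W − WB₂₂ = B₁₂, and let C = [[C₁₁, C₁₂],[C₂₁, C₂₂]] ∈ ℂ^{m×n} be partitioned conformally. Then for every bivariate polynomial f: f{A,Bᵀ}(C) = [I;0]·f{A₁₁,B₁₁ᵀ}(C₁₁ + VC₂₁)·[I, W] + [−V;I]·f{A₂₂,B₁₁ᵀ}(C₂₁)·[I, W] + [I;0]·f{A₁₁,B₂₂ᵀ}([I, V]·C·[−W;I])·[0, I] + [−V;I]·f{A₂₂,B₂₂ᵀ}(C₂₂ − C₂₁W)·[0, I]. -/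
/-! With `S = [[1, -V], [0, 1]]` and `T = [[1, -W], [0, 1]]` the Sylvester equations say
`A = S · diag(A₁₁, A₂₂) · S⁻¹` and `B = T · diag(B₁₁, B₂₂) · T⁻¹`, so
`f{A,Bᵀ}(C) = S · f{diag(A₁₁, A₂₂), diag(B₁₁, B₂₂)ᵀ}(S⁻¹ C T) · T⁻¹`. On block diagonal arguments
`f` acts blockwise, and expanding `S` into its block columns `[I;0]`, `[−V;I]` and `T⁻¹` into
its block rows `[I, W]`, `[0, I]` produces the four terms. -/

open Matrix

/-- For a bivariate polynomial `f(x,y) = Σ_{(i,j) ∈ s} c (i,j) xⁱ yʲ`, the bivariate matrix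
function `f{A,Bᵀ}(C) := Σ_{(i,j) ∈ s} c (i,j) • Aⁱ C Bʲ`. -/
noncomputable def bivApply {I J : Type*} [Fintype I] [Fintype J] [DecidableEq I] [DecidableEq J]
    (s : Finset (ℕ × ℕ)) (c : ℕ × ℕ → ℂ)
    (A : Matrix I I ℂ) (B : Matrix J J ℂ) (C : Matrix I J ℂ) : Matrix I J ℂ :=
  ∑ p ∈ s, c p • (A ^ p.1 * C * B ^ p.2)

namespace Matrix

variable {R : Type*} [Ring R] {m n k l : Type*}
  [Fintype m] [Fintype n] [DecidableEq m] [DecidableEq n]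

def upperUnipotent (V : Matrix m n R) : (Matrix (m ⊕ n) (m ⊕ n) R)ˣ where
  val := fromBlocks 1 V 0 1
  inv := fromBlocks 1 (-V) 0 1
  val_inv := by simp [fromBlocks_multiply, ← fromBlocks_one]
  inv_val := by simp [fromBlocks_multiply, ← fromBlocks_one]

lemma coe_upperUnipotent (V : Matrix m n R) :
    (upperUnipotent V : Matrix (m ⊕ n) (m ⊕ n) R) = fromBlocks 1 V 0 1 := rfl

lemma coe_upperUnipotent_inv (V : Matrix m n R) :
    (↑(upperUnipotent V)⁻¹ : Matrix (m ⊕ n) (m ⊕ n) R) = fromBlocks 1 (-V) 0 1 := rfl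

lemma fromBlocks_sylvester_eq_conj (A₁₁ : Matrix m m R) (A₂₂ : Matrix n n R)
    (V : Matrix m n R) :
    fromBlocks A₁₁ (A₁₁ * V - V * A₂₂) 0 A₂₂ =
      (↑(upperUnipotent V)⁻¹ : Matrix (m ⊕ n) (m ⊕ n) R) * fromBlocks A₁₁ 0 0 A₂₂ *
        (upperUnipotent V : Matrix (m ⊕ n) (m ⊕ n) R) := by
  rw [coe_upperUnipotent, coe_upperUnipotent_inv]
  simp [fromBlocks_multiply, sub_eq_add_neg]

lemma upperUnipotent_mul_fromBlocks_mul_inv [Fintype k] [Fintype l] [DecidableEq k]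
    [DecidableEq l] (V : Matrix m n R) (W : Matrix k l R) (C₁₁ : Matrix m k R)
    (C₁₂ : Matrix m l R) (C₂₁ : Matrix n k R) (C₂₂ : Matrix n l R) :
    (upperUnipotent V : Matrix (m ⊕ n) (m ⊕ n) R) * fromBlocks C₁₁ C₁₂ C₂₁ C₂₂ *
        (↑(upperUnipotent W)⁻¹ : Matrix (k ⊕ l) (k ⊕ l) R) =
      fromBlocks (C₁₁ + V * C₂₁)
        ((fromCols 1 V : Matrix m (m ⊕ n) R) * fromBlocks C₁₁ C₁₂ C₂₁ C₂₂ *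
          (fromRows (-W) 1 : Matrix (k ⊕ l) l R))
        C₂₁ (C₂₂ - C₂₁ * W) := by
  rw [coe_upperUnipotent, coe_upperUnipotent_inv, fromCols_mul_fromBlocks, fromCols_mul_fromRows]
  simp only [fromBlocks_multiply, Matrix.one_mul, Matrix.zero_mul, Matrix.mul_one,
    Matrix.mul_zero, Matrix.mul_neg, Matrix.add_mul, add_zero, zero_add]
  congr 1
  abel

omit [DecidableEq m] [DecidableEq n] in
lemma fromCols_mul_fromBlocks_mul_fromRows [Fintype k] [Fintype l] {p q : Type*}
    (P : Matrix p m R) (Q : Matrix p n R) (F₁₁ : Matrix m k R) (F₁₂ : Matrix m l R)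
    (F₂₁ : Matrix n k R) (F₂₂ : Matrix n l R) (X : Matrix k q R) (Y : Matrix l q R) :
    fromCols P Q * fromBlocks F₁₁ F₁₂ F₂₁ F₂₂ * fromRows X Y =
      P * F₁₁ * X + Q * F₂₁ * X + P * F₁₂ * Y + Q * F₂₂ * Y := by
  rw [fromCols_mul_fromBlocks, fromCols_mul_fromRows]
  simp only [Matrix.add_mul, Matrix.mul_assoc]
  abel

end Matrix

section bivApply

variable {I J I₁ I₂ J₁ J₂ : Type*} [Fintype I] [Fintype J] [DecidableEq I] [DecidableEq J]
  [Fintype I₁] [Fintype I₂] [Fintype J₁] [Fintype J₂]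
  [DecidableEq I₁] [DecidableEq I₂] [DecidableEq J₁] [DecidableEq J₂]

lemma bivApply_units_conj (t : Finset (ℕ × ℕ)) (c : ℕ × ℕ → ℂ) (u : (Matrix I I ℂ)ˣ)
    (w : (Matrix J J ℂ)ˣ) (A : Matrix I I ℂ) (B : Matrix J J ℂ) (C : Matrix I J ℂ) :
    bivApply t c ((↑u⁻¹ : Matrix I I ℂ) * A * (u : Matrix I I ℂ))
        ((↑w⁻¹ : Matrix J J ℂ) * B * (w : Matrix J J ℂ)) C =
      (↑u⁻¹ : Matrix I I ℂ) * bivApply t c A B ((u : Matrix I I ℂ) * C * (↑w⁻¹ : Matrix J J ℂ)) *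
        (w : Matrix J J ℂ) := by
  simp only [bivApply, Units.conj_pow', Matrix.mul_sum, Matrix.sum_mul, Matrix.mul_smul,
    Matrix.smul_mul]
  simp only [Matrix.mul_assoc]

lemma bivApply_fromBlocks_diagonal (t : Finset (ℕ × ℕ)) (c : ℕ × ℕ → ℂ)
    (A₁ : Matrix I₁ I₁ ℂ) (A₂ : Matrix I₂ I₂ ℂ) (B₁ : Matrix J₁ J₁ ℂ) (B₂ : Matrix J₂ J₂ ℂ)
    (C₁₁ : Matrix I₁ J₁ ℂ) (C₁₂ : Matrix I₁ J₂ ℂ) (C₂₁ : Matrix I₂ J₁ ℂ)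
    (C₂₂ : Matrix I₂ J₂ ℂ) :
    bivApply t c (fromBlocks A₁ 0 0 A₂) (fromBlocks B₁ 0 0 B₂) (fromBlocks C₁₁ C₁₂ C₂₁ C₂₂) =
      fromBlocks (bivApply t c A₁ B₁ C₁₁) (bivApply t c A₁ B₂ C₁₂)
        (bivApply t c A₂ B₁ C₂₁) (bivApply t c A₂ B₂ C₂₂) := by
  ext (i | i) (j | j) <;>
    simp [bivApply, fromBlocks_diagonal_pow, fromBlocks_multiply, Matrix.sum_apply]

end bivApply

/-- Splitting formula for bivariate matrix functions of block upper triangular arguments: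
given Sylvester solutions `V`, `W` for the off-diagonal blocks of `A`, `B`, the value
`f{A,Bᵀ}(C)` decomposes into four bivariate matrix functions of the diagonal blocks. -/
theorem bivApply_fromBlocks_splitting (p q r s : ℕ)
    (t : Finset (ℕ × ℕ)) (c : ℕ × ℕ → ℂ)
    (A₁₁ : Matrix (Fin p) (Fin p) ℂ) (A₁₂ : Matrix (Fin p) (Fin q) ℂ)
    (A₂₂ : Matrix (Fin q) (Fin q) ℂ)
    (B₁₁ : Matrix (Fin r) (Fin r) ℂ) (B₁₂ : Matrix (Fin r) (Fin s) ℂ)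
    (B₂₂ : Matrix (Fin s) (Fin s) ℂ)
    (C₁₁ : Matrix (Fin p) (Fin r) ℂ) (C₁₂ : Matrix (Fin p) (Fin s) ℂ)
    (C₂₁ : Matrix (Fin q) (Fin r) ℂ) (C₂₂ : Matrix (Fin q) (Fin s) ℂ)
    (V : Matrix (Fin p) (Fin q) ℂ) (W : Matrix (Fin r) (Fin s) ℂ)
    (hV : A₁₁ * V - V * A₂₂ = A₁₂) (hW : B₁₁ * W - W * B₂₂ = B₁₂) :
    bivApply t c (fromBlocks A₁₁ A₁₂ 0 A₂₂) (fromBlocks B₁₁ B₁₂ 0 B₂₂)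
        (fromBlocks C₁₁ C₁₂ C₂₁ C₂₂) =
      (fromRows 1 0 : Matrix (Fin p ⊕ Fin q) (Fin p) ℂ) * bivApply t c A₁₁ B₁₁ (C₁₁ + V * C₂₁) * fromCols 1 W
      + fromRows (-V) 1 * bivApply t c A₂₂ B₁₁ C₂₁ * fromCols 1 W
      + (fromRows 1 0 : Matrix (Fin p ⊕ Fin q) (Fin p) ℂ) *
          bivApply t c A₁₁ B₂₂
            ((fromCols 1 V : Matrix (Fin p) (Fin p ⊕ Fin q) ℂ) *
              fromBlocks C₁₁ C₁₂ C₂₁ C₂₂ *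
              (fromRows (-W) 1 : Matrix (Fin r ⊕ Fin s) (Fin s) ℂ)) * fromCols 0 1
      + fromRows (-V) 1 * bivApply t c A₂₂ B₂₂ (C₂₂ - C₂₁ * W) * fromCols 0 1 := by
  have hS : (↑(upperUnipotent V)⁻¹ : Matrix (Fin p ⊕ Fin q) (Fin p ⊕ Fin q) ℂ) =
      fromCols (fromRows 1 0) (fromRows (-V) 1) := by
    rw [coe_upperUnipotent_inv, fromCols_fromRows_eq_fromBlocks]
  have hT : (upperUnipotent W : Matrix (Fin r ⊕ Fin s) (Fin r ⊕ Fin s) ℂ) =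
      fromRows (fromCols 1 W) (fromCols 0 1) := by
    rw [coe_upperUnipotent, fromRows_fromCols_eq_fromBlocks]
  rw [← hV, ← hW, fromBlocks_sylvester_eq_conj, fromBlocks_sylvester_eq_conj,
    bivApply_units_conj, upperUnipotent_mul_fromBlocks_mul_inv, bivApply_fromBlocks_diagonal,
    hS, hT, fromCols_mul_fromBlocks_mul_fromRows]
  -- some products of the statement elaborate as `CStarMatrix` products, equal to these by `rfl`
  rfl
end

section
/- Let A = [[λ₁, a₁₂],[0, λ₂]], B = [[μ₁, b₁₂],[0, μ₂]], C = [[c₁₁, c₁₂],[c₂₁, c₂₂]] be 2×2 complex matrices with λ₁ ≠ λ₂ and μ₁ ≠ μ₂, and let f be a bivariate polynomial. Then f{A,Bᵀ}(C) = [[f(λ₁,μ₁)c₁₁, f(λ₁,μ₂)c₁₂],[f(λ₂,μ₁)c₂₁, f(λ₂,μ₂)c₂₂]] + [[c₂₁a₁₂·D_x f(·,μ₁), Δ],[0, c₂₁b₁₂·D_y f(λ₂,·)]], where D_x f(·,μ) := (f(λ₂,μ) − f(λ₁,μ))/(λ₂ − λ₁), D_y f(λ,·) := (f(λ,μ₂)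 − f(λ,μ₁))/(μ₂ − μ₁), and Δ := c₂₂a₁₂·D_x f(·,μ₂) + c₁₁b₁₂·D_y f(λ₁,·) + c₂₁a₁₂b₁₂·((f(λ₂,μ₂) − f(λ₁,μ₂) − f(λ₂,μ₁) + f(λ₁,μ₁))/((λ₂ − λ₁)(μ₂ − μ₁))). -/
open Matrix

/-- Scalar evaluation of the bivariate polynomial `f(x,y) = Σ_{(i,j) ∈ s} c (i,j) xⁱ yʲ`. -/
noncomputable def bivEval (s : Finset (ℕ × ℕ)) (c : ℕ × ℕ → ℂ) (x y : ℂ) : ℂ :=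
  ∑ p ∈ s, c p * x ^ p.1 * y ^ p.2

theorem pow_ut (x y a : ℂ) (h : x ≠ y) (n : ℕ) :
    !![x, a; 0, y] ^ n = !![x ^ n, a * ((y ^ n - x ^ n) / (y - x)); 0, y ^ n] := by
  have hyx : y - x ≠ 0 := sub_ne_zero.2 (Ne.symm h)
  induction n with
  | zero => simp [Matrix.one_fin_two]
  | succ n ih =>
      rw [pow_succ, ih, Matrix.mul_fin_two]
      have : x ^ n * a + a * ((y ^ n - x ^ n) / (y - x)) * y
          = a * ((y ^ (n + 1) - x ^ (n + 1)) / (y - x)) := by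
        field_simp; ring
      rw [this]; ring_nf

/-- Explicit formula for `f{A,Bᵀ}(C)` when `A = [[λ₁,a₁₂],[0,λ₂]]` and `B = [[μ₁,b₁₂],[0,μ₂]]`
are `2×2` upper triangular with distinct eigenvalues, in terms of `f` and its first- and
second-order divided differences at the pairs of eigenvalues. -/
theorem bivApply_two_by_two (s : Finset (ℕ × ℕ)) (c : ℕ × ℕ → ℂ)
    (lam₁ lam₂ mu₁ mu₂ a₁₂ b₁₂ c₁₁ c₁₂ c₂₁ c₂₂ : ℂ)
    (hlam : lam₁ ≠ lam₂) (hmu : mu₁ ≠ mu₂) :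
    bivApply s c !![lam₁, a₁₂; 0, lam₂] !![mu₁, b₁₂; 0, mu₂] !![c₁₁, c₁₂; c₂₁, c₂₂] =
      !![bivEval s c lam₁ mu₁ * c₁₁, bivEval s c lam₁ mu₂ * c₁₂;
         bivEval s c lam₂ mu₁ * c₂₁, bivEval s c lam₂ mu₂ * c₂₂]
      + !![c₂₁ * a₁₂ * ((bivEval s c lam₂ mu₁ - bivEval s c lam₁ mu₁) / (lam₂ - lam₁)),
             c₂₂ * a₁₂ * ((bivEval s c lam₂ mu₂ - bivEval s c lam₁ mu₂) / (lam₂ - lam₁))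
             + c₁₁ * b₁₂ * ((bivEval s c lam₁ mu₂ - bivEval s c lam₁ mu₁) / (mu₂ - mu₁))
             + c₂₁ * a₁₂ * b₁₂ *
                 ((bivEval s c lam₂ mu₂ - bivEval s c lam₁ mu₂
                    - bivEval s c lam₂ mu₁ + bivEval s c lam₁ mu₁) /
                  ((lam₂ - lam₁) * (mu₂ - mu₁)));
           0, c₂₁ * b₁₂ * ((bivEval s c lam₂ mu₂ - bivEval s c lam₂ mu₁) / (mu₂ - mu₁))] := by
  have hl : lam₂ - lam₁ ≠ 0 := sub_ne_zero.2 (Ne.symm hlam)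
  have hm : mu₂ - mu₁ ≠ 0 := sub_ne_zero.2 (Ne.symm hmu)
  unfold bivApply
  ext i j
  fin_cases i <;> fin_cases j <;>
    simp only [pow_ut _ _ _ hlam, pow_ut _ _ _ hmu, Matrix.mul_fin_two,
      Matrix.sum_apply, Matrix.smul_apply, Matrix.add_apply, Matrix.of_apply,
      Matrix.cons_val', Matrix.cons_val_zero, Matrix.cons_val_one, Matrix.head_cons,
      Matrix.head_fin_const, Matrix.empty_val', Matrix.cons_val_fin_one, smul_eq_mul,
      Fin.isValue, Fin.zero_eta, Fin.mk_one] <;>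
    simp only [bivEval, ← div_div, add_zero, zero_add, Finset.sum_div, Finset.sum_mul, Finset.mul_sum,
      ← Finset.sum_sub_distrib, ← Finset.sum_add_distrib] <;>
    refine Finset.sum_congr rfl fun p _ => ?_ <;>
    ring
end

section
/- Let V_A ∈ ℂ^{m×m} and V_B ∈ ℂ^{n×n} be invertible, C ∈ ℂ^{m×n}, G ∈ ℂ^{m×n}, and E ∈ ℂ^{m×n} with |E_{ij}| ≤ (max_{i,j}|G_{ij}|)·u for all i, j, for some u ≥ 0. Define F := V_A (G ∘ (V_A⁻¹ C V_B)) V_B⁻¹ and F̂ := V_A ((G + E) ∘ (V_A⁻¹ C V_B)) V_B⁻¹, where ∘ is the entrywise (Hadamard) product. Then ‖F − F̂‖_F ≤ κ(V_A)·κ(V_B)·‖C‖_F·(max_{i,j}|G_{ij}|)·u, where ‖·‖_F is the Frobenius norm and κ(V) := ‖V‖·‖V⁻¹‖ with ‖·‖ the spectral norm. -/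
/-!
The two computations differ by `V_A (E ∘ M) V_B⁻¹` with `M = V_A⁻¹ C V_B`. The Frobenius
norm is submultiplicative against the spectral norm on either side (column by column,
`‖P x‖ ≤ ‖P‖ ‖x‖`), and a Hadamard factor with entries bounded by `c` scales it by at most `c`;
chaining these bounds gives `‖V_A‖ (max |G| u) ‖V_A⁻¹‖ ‖C‖_F ‖V_B‖ ‖V_B⁻¹‖`.
-/

open Matrix
open scoped Matrix.Norms.L2Operator

/-- The Frobenius norm of a complex matrix. -/
noncomputable def frobNorm {I J : Type*} [Fintype I] [Fintype J]
    (M : Matrix I J ℂ) : ℝ :=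
  Real.sqrt (∑ i, ∑ j, ‖M i j‖ ^ 2)

section FrobeniusBounds

variable {l k m n : Type*} [Fintype l] [Fintype k] [Fintype m] [Fintype n]

lemma frobNorm_conjTranspose (M : Matrix m n ℂ) : frobNorm Mᴴ = frobNorm M := by
  unfold frobNorm
  rw [Finset.sum_comm]
  simp [conjTranspose_apply]

lemma frobNorm_neg (M : Matrix m n ℂ) : frobNorm (-M) = frobNorm M := by
  simp [frobNorm]

lemma frobNorm_le_mul_of_sum_sq_le {A : Matrix l k ℂ} {B : Matrix m n ℂ} {c : ℝ}
    (hc : 0 ≤ c) (h : ∑ i, ∑ j, ‖A i j‖ ^ 2 ≤ c ^ 2 * ∑ i, ∑ j, ‖B i j‖ ^ 2) :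
    frobNorm A ≤ c * frobNorm B := by
  unfold frobNorm
  rw [← Real.sqrt_sq hc, ← Real.sqrt_mul (sq_nonneg c)]
  exact Real.sqrt_le_sqrt h

lemma sum_norm_sq_mulVec_le [DecidableEq k] (P : Matrix l k ℂ) (v : k → ℂ) :
    ∑ i, ‖(P *ᵥ v) i‖ ^ 2 ≤ ‖P‖ ^ 2 * ∑ i, ‖v i‖ ^ 2 := by
  let x : EuclideanSpace ℂ k := WithLp.toLp 2 v
  rw [← EuclideanSpace.norm_sq_eq x, ← mul_pow]
  have h := pow_le_pow_left₀ (norm_nonneg _) (l2_opNorm_mulVec P x) 2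
  rwa [EuclideanSpace.norm_sq_eq] at h

lemma frobNorm_mul_le_l2_opNorm_mul [DecidableEq k] (P : Matrix l k ℂ) (X : Matrix k n ℂ) :
    frobNorm (P * X) ≤ ‖P‖ * frobNorm X := by
  refine frobNorm_le_mul_of_sum_sq_le (norm_nonneg P) ?_
  rw [Finset.sum_comm, Finset.sum_comm (f := fun i j => ‖X i j‖ ^ 2), Finset.mul_sum]
  exact Finset.sum_le_sum fun j _ => sum_norm_sq_mulVec_le P fun i => X i j

lemma frobNorm_mul_le_mul_l2_opNorm [DecidableEq k] [DecidableEq n] (X : Matrix m k ℂ)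
    (Q : Matrix k n ℂ) : frobNorm (X * Q) ≤ frobNorm X * ‖Q‖ := by
  rw [← frobNorm_conjTranspose, conjTranspose_mul, ← frobNorm_conjTranspose X,
    ← l2_opNorm_conjTranspose Q, mul_comm]
  exact frobNorm_mul_le_l2_opNorm_mul Qᴴ Xᴴ

lemma frobNorm_mul_mul_le [DecidableEq m] [DecidableEq k] [DecidableEq n]
    (P : Matrix l m ℂ) (X : Matrix m k ℂ) (Q : Matrix k n ℂ) :
    frobNorm (P * X * Q) ≤ ‖P‖ * frobNorm X * ‖Q‖ :=
  (frobNorm_mul_le_mul_l2_opNorm _ Q).trans <|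
    mul_le_mul_of_nonneg_right (frobNorm_mul_le_l2_opNorm_mul P X) (norm_nonneg Q)

lemma frobNorm_hadamard_le {E M : Matrix m n ℂ} {c : ℝ} (hc : 0 ≤ c)
    (hE : ∀ i j, ‖E i j‖ ≤ c) : frobNorm (E ⊙ M) ≤ c * frobNorm M := by
  refine frobNorm_le_mul_of_sum_sq_le hc ?_
  simp only [Finset.mul_sum, hadamard_apply, norm_mul, mul_pow]
  gcongr with i _ j _
  exact hE i j

end FrobeniusBounds

theorem diagonalization_forward_error_general (m n : ℕ)
    (V_A : Matrix (Fin m) (Fin m) ℂ) (V_B : Matrix (Fin n) (Fin n) ℂ)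
    (C G E : Matrix (Fin m) (Fin n) ℂ) (u : ℝ) (hu : 0 ≤ u)
    (hE : ∀ i j, ‖E i j‖ ≤ (⨆ ij : Fin m × Fin n, ‖G ij.1 ij.2‖) * u) :
    frobNorm (V_A * (Matrix.hadamard G (V_A⁻¹ * C * V_B)) * V_B⁻¹
        - V_A * (Matrix.hadamard (G + E) (V_A⁻¹ * C * V_B)) * V_B⁻¹) ≤
      (‖V_A‖ * ‖V_A⁻¹‖) * (‖V_B‖ * ‖V_B⁻¹‖) * frobNorm C *
        (⨆ ij : Fin m × Fin n, ‖G ij.1 ij.2‖) * u := by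
  set g := ⨆ ij : Fin m × Fin n, ‖G ij.1 ij.2‖
  set M := V_A⁻¹ * C * V_B
  have hgu : 0 ≤ g * u := mul_nonneg (Real.iSup_nonneg fun _ => norm_nonneg _) hu
  have hM : frobNorm M ≤ ‖V_A⁻¹‖ * frobNorm C * ‖V_B‖ := frobNorm_mul_mul_le _ _ _
  have hEM : frobNorm (E ⊙ M) ≤ g * u * frobNorm M := frobNorm_hadamard_le hgu hE
  rw [← Matrix.sub_mul, ← Matrix.mul_sub, add_hadamard, sub_add_cancel_left, Matrix.mul_neg,
    Matrix.neg_mul, frobNorm_neg]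
  calc frobNorm (V_A * (E ⊙ M) * V_B⁻¹)
      ≤ ‖V_A‖ * frobNorm (E ⊙ M) * ‖V_B⁻¹‖ := frobNorm_mul_mul_le _ _ _
    _ ≤ ‖V_A‖ * (g * u * (‖V_A⁻¹‖ * frobNorm C * ‖V_B‖)) * ‖V_B⁻¹‖ := by
        gcongr
        exact hEM.trans (mul_le_mul_of_nonneg_left hM hgu)
    _ = ‖V_A‖ * ‖V_A⁻¹‖ * (‖V_B‖ * ‖V_B⁻¹‖) * frobNorm C * g * u := by ring

/-- Forward error of evaluating a bivariate matrix function by diagonalization: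
if `F = V_A (G ∘ (V_A⁻¹ C V_B)) V_B⁻¹` and `F̂` is the same expression with `G` replaced by
`G + E`, where `|E_{ ij}| ≤ (max_{i,j}|G_{ij}|)·u`, then
`‖F − F̂‖_F ≤ κ(V_A) κ(V_B) ‖C‖_F (max_{i,j}|G_{ij}|) u`, where `κ(V) = ‖V‖·‖V⁻¹‖` is the
spectral condition number and `‖·‖` the spectral norm. -/
theorem diagonalization_forward_error (m n : ℕ)
    (V_A : Matrix (Fin m) (Fin m) ℂ) (V_B : Matrix (Fin n) (Fin n) ℂ)
    (hA : IsUnit V_A) (hB : IsUnit V_B)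
    (C G E : Matrix (Fin m) (Fin n) ℂ) (u : ℝ) (hu : 0 ≤ u)
    (hE : ∀ i j, ‖E i j‖ ≤ (⨆ ij : Fin m × Fin n, ‖G ij.1 ij.2‖) * u) :
    frobNorm (V_A * (Matrix.hadamard G (V_A⁻¹ * C * V_B)) * V_B⁻¹
        - V_A * (Matrix.hadamard (G + E) (V_A⁻¹ * C * V_B)) * V_B⁻¹) ≤
      (‖V_A‖ * ‖V_A⁻¹‖) * (‖V_B‖ * ‖V_B⁻¹‖) * frobNorm C *
        (⨆ ij : Fin m × Fin n, ‖G ij.1 ij.2‖) * u :=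
  diagonalization_forward_error_general m n V_A V_B C G E u hu hE
end

section
/- Let A = [[α, β],[−β, α]] and B = [[γ, δ],[−δ, γ]] be real 2×2 matrices, C = [[c₁₁, c₁₂],[c₂₁, c₂₂]] a real 2×2 matrix, and f a bivariate polynomial with real coefficients. Set z := α + iβ, w := γ + iδ. Then f{A,Bᵀ}(C) = (1/2)·[[Q₁ + Q₂, Q₃ + Q₄],[Q₃ − Q₄, Q₁ − Q₂]], where Q₁ := (c₂₁ − c₁₂)·Im f(z,w) + (c₁₁ + c₂₂)·Re f(z,w), Q₂ := (c₁₂ + c₂₁)·Im f(z, w̄) + (c₁₁ − c₂₂)·Re f(z, w̄), Q₃ := (c₂₂ − c₁₁)·Im f(z, w̄) + (c₁₂ + c₂₁)·Re f(z, w̄), and Q₄ := (c₁₁ + c₂₂)·Im f(z,w) + (c₁₂ − c₂₁)·Re f(z,w). -/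
open Matrix

/-- For a bivariate polynomial `f(x,y) = Σ_{(i,j) ∈ s} c (i,j) xⁱ yʲ` with real coefficients,
the bivariate matrix function `f{A,Bᵀ}(C) := Σ_{(i,j) ∈ s} c (i,j) • Aⁱ C Bʲ` on real
matrices. -/
noncomputable def bivApplyR {I J : Type*} [Fintype I] [Fintype J] [DecidableEq I] [DecidableEq J]
    (s : Finset (ℕ × ℕ)) (c : ℕ × ℕ → ℝ)
    (A : Matrix I I ℝ) (B : Matrix J J ℝ) (C : Matrix I J ℝ) : Matrix I J ℝ :=
  ∑ p ∈ s, c p • (A ^ p.1 * C * B ^ p.2)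

/-- Evaluation of a real-coefficient bivariate polynomial at complex arguments. -/
noncomputable def bivEvalC (s : Finset (ℕ × ℕ)) (c : ℕ × ℕ → ℝ) (z w : ℂ) : ℂ :=
  ∑ p ∈ s, (c p : ℂ) * z ^ p.1 * w ^ p.2

lemma rot_pow (α β : ℝ) (n : ℕ) :
    (!![α, β; -β, α] : Matrix (Fin 2) (Fin 2) ℝ) ^ n =
      !![(Complex.mk α β ^ n).re, (Complex.mk α β ^ n).im;
         -(Complex.mk α β ^ n).im, (Complex.mk α β ^ n).re] := by
  induction n with
  | zero => simp [Matrix.one_fin_two]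
  | succ n ih =>
      rw [pow_succ, ih, pow_succ]
      ext i j
      fin_cases i <;> fin_cases j <;>
        simp [Matrix.mul_apply, Fin.sum_univ_two, Complex.mul_re, Complex.mul_im] <;> ring

lemma comb_add (s : Finset (ℕ × ℕ)) (k1 k2 k3 k4 : ℝ) (f g h u : ℕ × ℕ → ℝ) :
    (1 / 2 : ℝ) * (k1 * (∑ p ∈ s, f p) + k2 * (∑ p ∈ s, g p)
        + (k3 * (∑ p ∈ s, h p) + k4 * (∑ p ∈ s, u p)))
      = ∑ p ∈ s, (1 / 2 : ℝ) * (k1 * f p + k2 * g p + (k3 * h p + k4 * u p)) := by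
  simp only [Finset.mul_sum, ← Finset.sum_add_distrib]

lemma comb_sub (s : Finset (ℕ × ℕ)) (k1 k2 k3 k4 : ℝ) (f g h u : ℕ × ℕ → ℝ) :
    (1 / 2 : ℝ) * (k1 * (∑ p ∈ s, f p) + k2 * (∑ p ∈ s, g p)
        - (k3 * (∑ p ∈ s, h p) + k4 * (∑ p ∈ s, u p)))
      = ∑ p ∈ s, (1 / 2 : ℝ) * (k1 * f p + k2 * g p - (k3 * h p + k4 * u p)) := by
  simp only [Finset.mul_sum, ← Finset.sum_add_distrib, ← Finset.sum_sub_distrib]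

/-- Real formula for a bivariate polynomial function of the `2×2` rotation-like blocks
`A = [[α, β],[−β, α]]`, `B = [[γ, δ],[−δ, γ]]`: with `z = α + iβ`, `w = γ + iδ`,
`f{A,Bᵀ}(C) = (1/2)·[[Q₁ + Q₂, Q₃ + Q₄],[Q₃ − Q₄, Q₁ − Q₂]]`. -/
theorem bivApply_rotation_blocks (s : Finset (ℕ × ℕ)) (c : ℕ × ℕ → ℝ)
    (α β γ δ c₁₁ c₁₂ c₂₁ c₂₂ : ℝ)
    (z w : ℂ) (hz : z = Complex.mk α β) (hw : w = Complex.mk γ δ)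
    (Q₁ Q₂ Q₃ Q₄ : ℝ)
    (hQ₁ : Q₁ = (c₂₁ - c₁₂) * (bivEvalC s c z w).im + (c₁₁ + c₂₂) * (bivEvalC s c z w).re)
    (hQ₂ : Q₂ = (c₁₂ + c₂₁) * (bivEvalC s c z (starRingEnd ℂ w)).im
        + (c₁₁ - c₂₂) * (bivEvalC s c z (starRingEnd ℂ w)).re)
    (hQ₃ : Q₃ = (c₂₂ - c₁₁) * (bivEvalC s c z (starRingEnd ℂ w)).im
        + (c₁₂ + c₂₁) * (bivEvalC s c z (starRingEnd ℂ w)).re)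
    (hQ₄ : Q₄ = (c₁₁ + c₂₂) * (bivEvalC s c z w).im + (c₁₂ - c₂₁) * (bivEvalC s c z w).re) :
    bivApplyR s c !![α, β; -β, α] !![γ, δ; -δ, γ] !![c₁₁, c₁₂; c₂₁, c₂₂] =
      (1 / 2 : ℝ) • !![Q₁ + Q₂, Q₃ + Q₄; Q₃ - Q₄, Q₁ - Q₂] := by
  subst hz hw
  ext i j
  simp only [bivApplyR, Matrix.sum_apply, Matrix.smul_apply, smul_eq_mul]
  have term : ∀ (p : ℕ × ℕ) (i j : Fin 2),
      (!![α, β; -β, α] ^ p.1 * !![c₁₁, c₁₂; c₂₁, c₂₂] * !![γ, δ; -δ, γ] ^ p.2) i j =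
      (!![(Complex.mk α β ^ p.1).re, (Complex.mk α β ^ p.1).im;
          -(Complex.mk α β ^ p.1).im, (Complex.mk α β ^ p.1).re] * !![c₁₁, c₁₂; c₂₁, c₂₂] *
        !![(Complex.mk γ δ ^ p.2).re, (Complex.mk γ δ ^ p.2).im;
          -(Complex.mk γ δ ^ p.2).im, (Complex.mk γ δ ^ p.2).re]) i j := by
    intro p i j; rw [rot_pow, rot_pow]
  simp only [term]
  fin_cases i <;> fin_cases j
  · simp only [Fin.zero_eta, Fin.isValue, Matrix.smul_apply, Matrix.cons_val', Matrix.cons_val_zero,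
      Matrix.empty_val', Matrix.cons_val_fin_one, smul_eq_mul, Matrix.of_apply]
    rw [hQ₁, hQ₂]
    simp only [bivEvalC, Complex.re_sum, Complex.im_sum]
    rw [comb_add]
    refine Finset.sum_congr rfl fun p _ => ?_
    simp only [Matrix.mul_apply, Fin.sum_univ_two, ← map_pow, Complex.mul_re, Complex.mul_im,
      Complex.ofReal_re, Complex.ofReal_im, Complex.conj_re, Complex.conj_im, Fin.isValue,
      Matrix.cons_val', Matrix.cons_val_zero, Matrix.cons_val_one, Matrix.head_cons,
      Matrix.head_fin_const, Matrix.empty_val', Matrix.cons_val_fin_one, Matrix.of_apply]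
    ring
  · simp only [Fin.zero_eta, Fin.mk_one, Fin.isValue, Matrix.smul_apply, Matrix.cons_val',
      Matrix.cons_val_zero, Matrix.cons_val_one, Matrix.head_cons, Matrix.empty_val',
      Matrix.cons_val_fin_one, smul_eq_mul, Matrix.of_apply]
    rw [hQ₃, hQ₄]
    simp only [bivEvalC, Complex.re_sum, Complex.im_sum]
    rw [comb_add]
    refine Finset.sum_congr rfl fun p _ => ?_
    simp only [Matrix.mul_apply, Fin.sum_univ_two, ← map_pow, Complex.mul_re, Complex.mul_im,
      Complex.ofReal_re, Complex.ofReal_im, Complex.conj_re, Complex.conj_im, Fin.isValue,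
      Matrix.cons_val', Matrix.cons_val_zero, Matrix.cons_val_one, Matrix.head_cons,
      Matrix.head_fin_const, Matrix.empty_val', Matrix.cons_val_fin_one, Matrix.of_apply]
    ring
  · simp only [Fin.mk_one, Fin.zero_eta, Fin.isValue, Matrix.smul_apply, Matrix.cons_val',
      Matrix.cons_val_zero, Matrix.cons_val_one, Matrix.head_cons, Matrix.head_fin_const,
      Matrix.empty_val', Matrix.cons_val_fin_one, smul_eq_mul, Matrix.of_apply]
    rw [hQ₃, hQ₄]
    simp only [bivEvalC, Complex.re_sum, Complex.im_sum]
    rw [comb_sub]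
    refine Finset.sum_congr rfl fun p _ => ?_
    simp only [Matrix.mul_apply, Fin.sum_univ_two, ← map_pow, Complex.mul_re, Complex.mul_im,
      Complex.ofReal_re, Complex.ofReal_im, Complex.conj_re, Complex.conj_im, Fin.isValue,
      Matrix.cons_val', Matrix.cons_val_zero, Matrix.cons_val_one, Matrix.head_cons,
      Matrix.head_fin_const, Matrix.empty_val', Matrix.cons_val_fin_one, Matrix.of_apply]
    ring
  · simp only [Fin.mk_one, Fin.isValue, Matrix.smul_apply, Matrix.cons_val', Matrix.cons_val_one,
      Matrix.head_cons, Matrix.head_fin_const, Matrix.empty_val', Matrix.cons_val_fin_one,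
      smul_eq_mul, Matrix.of_apply]
    rw [hQ₁, hQ₂]
    simp only [bivEvalC, Complex.re_sum, Complex.im_sum]
    rw [comb_sub]
    refine Finset.sum_congr rfl fun p _ => ?_
    simp only [Matrix.mul_apply, Fin.sum_univ_two, ← map_pow, Complex.mul_re, Complex.mul_im,
      Complex.ofReal_re, Complex.ofReal_im, Complex.conj_re, Complex.conj_im, Fin.isValue,
      Matrix.cons_val', Matrix.cons_val_zero, Matrix.cons_val_one, Matrix.head_cons,
      Matrix.head_fin_const, Matrix.empty_val', Matrix.cons_val_fin_one, Matrix.of_apply]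
    ring
end

section
/- Let A = [[A₁₁, A₁₂],[0, a]] ∈ ℂ^{m×m} with A₁₁ ∈ ℂ^{(m−1)×(m−1)} and a ∈ ℂ a scalar, and B = [[b, B₁₂],[0, B₂₂]] ∈ ℂ^{n×n} with b ∈ ℂ a scalar and B₂₂ ∈ ℂ^{(n−1)×(n−1)}. Assume a + b ≠ 0, A₁₁ + bI is invertible, and B₂₂ + aI is invertible. If X = [[X₁₁, X₁₂],[X₂₁, X₂₂]] (partitioned conformally) satisfies the Sylvester equation AX + XB = C = [[C₁₁, C₁₂],[C₂₁, C₂₂]], then: X₂₁ = C₂₁/(a + b); X₁₁ = (A₁₁ + bI)⁻¹(C₁₁ − A₁₂X₂₁); X₂₂ = (C₂₂ − X₂₁B₁₂)(B₂₂ + aI)⁻¹; and A₁₁X₁₂ + X₁₂B₂₂ = C₁₂ − A₁₂X₂₂ − X₁₁B₁₂. -/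
open Matrix

/-- One step of the Bartels–Stewart algorithm: if the blocks of `X` (partitioned conformally
with `A = [[A₁₁, A₁₂],[0, a]]` and `B = [[b, B₁₂],[0, B₂₂]]`) satisfy `AX + XB = C`, then
`X₂₁ = C₂₁/(a+b)`, `X₁₁ = (A₁₁ + bI)⁻¹(C₁₁ − A₁₂X₂₁)`,
`X₂₂ = (C₂₂ − X₂₁B₁₂)(B₂₂ + aI)⁻¹`, and `A₁₁X₁₂ + X₁₂B₂₂ = C₁₂ − A₁₂X₂₂ − X₁₁B₁₂`. -/
theorem bartels_stewart_step (p q : ℕ)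
    (A₁₁ : Matrix (Fin p) (Fin p) ℂ) (A₁₂ : Matrix (Fin p) (Fin 1) ℂ) (a b : ℂ)
    (B₁₂ : Matrix (Fin 1) (Fin q) ℂ) (B₂₂ : Matrix (Fin q) (Fin q) ℂ)
    (X₁₁ C₁₁ : Matrix (Fin p) (Fin 1) ℂ) (X₁₂ C₁₂ : Matrix (Fin p) (Fin q) ℂ)
    (X₂₁ C₂₁ : Matrix (Fin 1) (Fin 1) ℂ) (X₂₂ C₂₂ : Matrix (Fin 1) (Fin q) ℂ)
    (hab : a + b ≠ 0)
    (h₁ : IsUnit (A₁₁ + b • (1 : Matrix (Fin p) (Fin p) ℂ)))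
    (h₂ : IsUnit (B₂₂ + a • (1 : Matrix (Fin q) (Fin q) ℂ)))
    (hX : fromBlocks A₁₁ A₁₂ 0 (a • (1 : Matrix (Fin 1) (Fin 1) ℂ)) *
            fromBlocks X₁₁ X₁₂ X₂₁ X₂₂
          + fromBlocks X₁₁ X₁₂ X₂₁ X₂₂ *
            fromBlocks (b • (1 : Matrix (Fin 1) (Fin 1) ℂ)) B₁₂ 0 B₂₂
          = fromBlocks C₁₁ C₁₂ C₂₁ C₂₂) :
    X₂₁ = (a + b)⁻¹ • C₂₁ ∧
    X₁₁ = (A₁₁ + b • 1)⁻¹ * (C₁₁ - A₁₂ * X₂₁) ∧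
    X₂₂ = (C₂₂ - X₂₁ * B₁₂) * (B₂₂ + a • 1)⁻¹ ∧
    A₁₁ * X₁₂ + X₁₂ * B₂₂ = C₁₂ - A₁₂ * X₂₂ - X₁₁ * B₁₂ := by
  rw [fromBlocks_multiply, fromBlocks_multiply, fromBlocks_add] at hX
  have e11 := congrArg Matrix.toBlocks₁₁ hX
  have e12 := congrArg Matrix.toBlocks₁₂ hX
  have e21 := congrArg Matrix.toBlocks₂₁ hX
  have e22 := congrArg Matrix.toBlocks₂₂ hX
  simp only [toBlocks_fromBlocks₁₁, toBlocks_fromBlocks₁₂, toBlocks_fromBlocks₂₁,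
    toBlocks_fromBlocks₂₂, Matrix.zero_mul, Matrix.mul_zero, add_zero, zero_add,
    Matrix.smul_mul, Matrix.mul_smul, Matrix.one_mul, Matrix.mul_one] at e11 e12 e21 e22
  -- e21 : a • X₂₁ + b • X₂₁ = C₂₁
  have h21 : X₂₁ = (a + b)⁻¹ • C₂₁ := by
    rw [← e21, ← add_smul, smul_smul, inv_mul_cancel₀ hab, one_smul]
  refine ⟨h21, ?_, ?_, ?_⟩
  · have : (A₁₁ + b • 1) * X₁₁ = C₁₁ - A₁₂ * X₂₁ := by
      rw [Matrix.add_mul, Matrix.smul_mul, Matrix.one_mul]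
      rw [← e11]; abel
    rw [← this, ← Matrix.mul_assoc, Matrix.nonsing_inv_mul _ (isUnit_iff_isUnit_det _ |>.mp h₁),
      Matrix.one_mul]
  · have : X₂₂ * (B₂₂ + a • 1) = C₂₂ - X₂₁ * B₁₂ := by
      rw [Matrix.mul_add, Matrix.mul_smul, Matrix.mul_one]
      rw [← e22]; abel
    rw [← this, Matrix.mul_assoc, Matrix.mul_nonsing_inv _ (isUnit_iff_isUnit_det _ |>.mp h₂),
      Matrix.mul_one]
  · rw [← e12]; abel
end

section
/- Let A₁₁ ∈ ℂ^{p×p}, let a, b ∈ ℂ with a + b ≠ 0 and A₁₁ + bI invertible, let A₁₂, V, C₁₁ ∈ ℂ^{p×1} with (A₁₁ − aI)V = A₁₂ (i.e., V solves the Sylvester equation A₁₁V − Va = A₁₂), and let c ∈ ℂ. Then (A₁₁ + bI)⁻¹(C₁₁ + Vc) − (c/(a + b))·V = (A₁₁ + bI)⁻¹(C₁₁ − (c/(a + b))·A₁₂); this is the cancellation identity, special to f(x,y) = 1/(x+y), that makes the Bartels–Stewart algorithm avoid computing V explicitly. -/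
open Matrix

/-- The cancellation identity, special to `f(x,y) = 1/(x+y)`, underlying the
Bartels–Stewart algorithm: if `(A₁₁ − aI)V = A₁₂` (i.e. `V` solves `A₁₁V − Va = A₁₂`),
`a + b ≠ 0` and `A₁₁ + bI` is invertible, then
`(A₁₁ + bI)⁻¹(C₁₁ + Vc) − (c/(a+b))·V = (A₁₁ + bI)⁻¹(C₁₁ − (c/(a+b))·A₁₂)`. -/
theorem bartels_stewart_cancellation (p : ℕ)
    (A₁₁ : Matrix (Fin p) (Fin p) ℂ) (a b c : ℂ)
    (A₁₂ V C₁₁ : Matrix (Fin p) (Fin 1) ℂ)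
    (hab : a + b ≠ 0)
    (h : IsUnit (A₁₁ + b • (1 : Matrix (Fin p) (Fin p) ℂ)))
    (hV : (A₁₁ - a • 1) * V = A₁₂) :
    (A₁₁ + b • 1)⁻¹ * (C₁₁ + c • V) - (c / (a + b)) • V =
      (A₁₁ + b • 1)⁻¹ * (C₁₁ - (c / (a + b)) • A₁₂) := by
  set M := A₁₁ + b • (1 : Matrix (Fin p) (Fin p) ℂ) with hM
  set s := c / (a + b) with hs
  have hMV : M⁻¹ * M = 1 := Matrix.nonsing_inv_mul M ((Matrix.isUnit_iff_isUnit_det M).mp h)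
  have key : s • V = M⁻¹ * (s • (M * V)) := by
    rw [Matrix.mul_smul, ← Matrix.mul_assoc, hMV, Matrix.one_mul]
  have hsc : s * (a + b) = c := div_mul_cancel₀ c hab
  have hA : s • A₁₂ = s • (M * V) - c • V := by
    rw [← hV, hM, ← hsc]
    have : (A₁₁ + b • 1) * V = (A₁₁ - a • 1) * V + (a + b) • V := by
      rw [Matrix.add_mul, Matrix.sub_mul, Matrix.smul_mul, Matrix.smul_mul,
        Matrix.one_mul]
      module
    rw [this, smul_add, smul_smul]
    abel
  rw [key, ← Matrix.mul_sub]
  congr 1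
  rw [hA]
  abel
end

section
/- Let A ∈ ℂ^{m×m} and B ∈ ℂ^{n×n} be diagonalizable: A = S_A D_A S_A⁻¹ and B = S_B D_B S_B⁻¹ with D_A = diag(λ₁,…,λ_m), D_B = diag(μ₁,…,μ_n) diagonal and S_A, S_B invertible. Then for every C ∈ ℂ^{m×n} and every bivariate polynomial f, f{A,Bᵀ}(C) = S_A · (G ∘ (S_A⁻¹ C S_B)) · S_B⁻¹, where G ∈ ℂ^{m×n} has entries G_{ij} = f(λᵢ, μⱼ) and ∘ is the entrywise (Hadamard) product; this establishes the correctness of evaluating a bivariate matrix function by diagonalization of both arguments. -/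
open Matrix

lemma conjPowDiag {k : ℕ} (S : Matrix (Fin k) (Fin k) ℂ) (d : Fin k → ℂ) (hS : IsUnit S)
    (t : ℕ) : (S * Matrix.diagonal d * S⁻¹) ^ t = S * Matrix.diagonal (d ^ t) * S⁻¹ := by
  induction t with
  | zero =>
    rw [pow_zero, pow_zero d]
    rw [show Matrix.diagonal (1 : Fin k → ℂ) = 1 from Matrix.diagonal_one, Matrix.mul_one,
      Matrix.mul_nonsing_inv S ((Matrix.isUnit_iff_isUnit_det S).mp hS)]
  | succ t ih =>
    rw [pow_succ, ih]
    have hinv : S⁻¹ * S = 1 :=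
      Matrix.nonsing_inv_mul S ((Matrix.isUnit_iff_isUnit_det S).mp hS)
    rw [show S * Matrix.diagonal (d ^ t) * S⁻¹ * (S * Matrix.diagonal d * S⁻¹)
        = S * (Matrix.diagonal (d ^ t) * (S⁻¹ * S) * Matrix.diagonal d) * S⁻¹ by
      noncomm_ring]
    simp only [hinv, Matrix.mul_one, Matrix.diagonal_mul_diagonal]
    rfl

/-- Correctness of evaluating a bivariate matrix function by diagonalization of both
arguments: if `A = S_A D_A S_A⁻¹` and `B = S_B D_B S_B⁻¹` with `D_A = diag(λ)`,
`D_B = diag(μ)` and `S_A`, `S_B` invertible, then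
`f{A,Bᵀ}(C) = S_A (G ∘ (S_A⁻¹ C S_B)) S_B⁻¹` where `G i j = f(λᵢ, μⱼ)` and `∘` is the
Hadamard product. -/
theorem bivApply_by_diagonalization (m n : ℕ) (s : Finset (ℕ × ℕ)) (c : ℕ × ℕ → ℂ)
    (A S_A : Matrix (Fin m) (Fin m) ℂ) (B S_B : Matrix (Fin n) (Fin n) ℂ)
    (C : Matrix (Fin m) (Fin n) ℂ) (lam : Fin m → ℂ) (mu : Fin n → ℂ)
    (hSA : IsUnit S_A) (hSB : IsUnit S_B)
    (hA : A = S_A * Matrix.diagonal lam * S_A⁻¹)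
    (hB : B = S_B * Matrix.diagonal mu * S_B⁻¹) :
    bivApply s c A B C =
      S_A * Matrix.hadamard (Matrix.of fun i j => bivEval s c (lam i) (mu j))
          (S_A⁻¹ * C * S_B) * S_B⁻¹ := by
  subst hA hB
  unfold bivApply
  have step : ∀ p : ℕ × ℕ,
      (S_A * Matrix.diagonal lam * S_A⁻¹) ^ p.1 * C * (S_B * Matrix.diagonal mu * S_B⁻¹) ^ p.2
      = S_A * (Matrix.diagonal (lam ^ p.1) * (S_A⁻¹ * C * S_B) * Matrix.diagonal (mu ^ p.2))
          * S_B⁻¹ := by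
    intro p
    rw [conjPowDiag S_A lam hSA, conjPowDiag S_B mu hSB]
    simp only [Matrix.mul_assoc]
  calc ∑ p ∈ s, c p • ((S_A * Matrix.diagonal lam * S_A⁻¹) ^ p.1 * C
          * (S_B * Matrix.diagonal mu * S_B⁻¹) ^ p.2)
      = S_A * (∑ p ∈ s, c p •
          (Matrix.diagonal (lam ^ p.1) * (S_A⁻¹ * C * S_B) * Matrix.diagonal (mu ^ p.2)))
          * S_B⁻¹ := by
        rw [Matrix.mul_sum, Matrix.sum_mul]
        refine Finset.sum_congr rfl fun p _ => ?_
        rw [step p, Matrix.mul_smul, Matrix.smul_mul]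
    _ = S_A * Matrix.hadamard (Matrix.of fun i j => bivEval s c (lam i) (mu j))
          (S_A⁻¹ * C * S_B) * S_B⁻¹ := by
        congr 2
        ext i j
        simp [Matrix.sum_apply, Matrix.mul_apply, Matrix.diagonal, Matrix.hadamard,
          bivEval, Finset.sum_mul, Pi.pow_apply]
        ring_nf
        rw [Finset.sum_comm]
        refine Finset.sum_congr rfl fun p _ => ?_
        ring
end
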